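/- arXiv:0808.4122 — 10 statements merged into one kernel-verified Lean document; each statement's English description precedes it below -/
import Mathlib

section
/- Let L be a regular language over an alphabet Σ, recognized by a DFA with state set Q, and let m = |Q|. For any integer n ≥ 1, any subset S ⊆ L ∩ Σ^n with |S| > m, and any index i ∈ [0, n], there exist two distinct strings x, y ∈ S such that both swapped strings (first i symbols of x followed by last n−i symbols of y) and (first i symbols of y followed by last n−i symbols of x) belong to L. -/
/-- **Swapping Lemma for regular languages (simple form).**
Let `L` be a language recognized by a DFA `M` with finite state set `Q` and
`m = |Q|`.  For every `n ≥ 1`, every finite set `S` of strings of length `n`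
belonging to `L` with `|S| > m`, and every `i ∈ [0, n]`, there exist two
distinct strings `x, y ∈ S` such that both swapped strings
`pref_i(x) ++ suf_{n-i}(y)` and `pref_i(y) ++ suf_{n-i}(x)` belong to `L`. -/
theorem swapping_lemma_regular {α Q : Type} [Fintype Q] (M : DFA α Q)
    (n : ℕ) (hn : 1 ≤ n) (S : Finset (List α))
    (hS : ∀ x ∈ S, x ∈ M.accepts ∧ x.length = n)
    (hcard : Fintype.card Q < S.card)
    (i : ℕ) (hi : i ≤ n) :
    ∃ x ∈ S, ∃ y ∈ S, x ≠ y ∧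
      (x.take i ++ y.drop i) ∈ M.accepts ∧
      (y.take i ++ x.drop i) ∈ M.accepts := by
  obtain ⟨x, hx, y, hy, hxy, hfeq⟩ :=
    Finset.exists_ne_map_eq_of_card_lt_of_maps_to
      (by simpa using hcard)
      (fun a (_ : a ∈ S) => Finset.mem_univ (M.evalFrom M.start (a.take i)))
  refine ⟨x, hx, y, hy, hxy, ?_, ?_⟩
  · have := (hS y hy).1
    rw [DFA.mem_accepts] at this ⊢
    rw [DFA.eval, M.evalFrom_of_append, hfeq, ← M.evalFrom_of_append, List.take_append_drop, ← DFA.eval]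
    exact this
  · have := (hS x hx).1
    rw [DFA.mem_accepts] at this ⊢
    rw [DFA.eval, M.evalFrom_of_append, ← hfeq, ← M.evalFrom_of_append, List.take_append_drop, ← DFA.eval]
    exact this
end

section
/- Let L be a regular language recognized by a DFA with state set Q, let k ≥ 1, and set m = |Q|^k. For any n ≥ 1, any subset S ⊆ L ∩ Σ^n with |S| > m, and any sequence of block lengths (i₁, …, i_k) of positive integers with i₁ + ⋯ + i_k ≤ n, there exist two distinct strings x = x₁x₂⋯x_{k+1} and y = y₁y₂⋯y_{k+1} in S, where |x_j| = |y_j| = i_j for j ∈ [1,k] and |x_{k+1}| = |y_{k+1}|, such that for every j ∈ [1,k], both strings x₁⋯x_{j−1} y_j x_{j+1}⋯x_{k+1} and y₁⋯y_{j−1} x_j y_{j+1}⋯y_{k+1} belong to L. -/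
/-- **Swapping Lemma for regular languages (general form).**
Let `L` be recognized by a DFA with state set `Q`, `k ≥ 1`, `m = |Q|^k`.
For any `n ≥ 1`, any `S ⊆ L ∩ Σⁿ` with `|S| > m`, and any block lengths
`bl 0, …, bl (k-1) ≥ 1` with total sum `≤ n`, there are two distinct strings
`x, y ∈ S` such that for every block index `j < k`, replacing the `j`-th block
of `x` by the `j`-th block of `y` (and vice versa) yields strings in `L`.
Here the `j`-th block of a string `w` occupies positions
`∑_{e<j} bl e` through `∑_{e<j} bl e + bl j`. -/
theorem swapping_lemma_regular_general {α Q : Type} [Fintype Q] (M : DFA α Q)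
    (k : ℕ) (hk : 1 ≤ k)
    (n : ℕ) (hn : 1 ≤ n) (S : Finset (List α))
    (hS : ∀ x ∈ S, x ∈ M.accepts ∧ x.length = n)
    (hcard : Fintype.card Q ^ k < S.card)
    (bl : ℕ → ℕ) (hbl : ∀ j < k, 1 ≤ bl j)
    (hsum : (Finset.range k).sum bl ≤ n) :
    ∃ x ∈ S, ∃ y ∈ S, x ≠ y ∧
      ∀ j < k,
        (x.take ((Finset.range j).sum bl)
            ++ ((y.drop ((Finset.range j).sum bl)).take (bl j))
            ++ x.drop ((Finset.range j).sum bl + bl j)) ∈ M.accepts ∧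
        (y.take ((Finset.range j).sum bl)
            ++ ((x.drop ((Finset.range j).sum bl)).take (bl j))
            ++ y.drop ((Finset.range j).sum bl + bl j)) ∈ M.accepts := by
  classical
  obtain ⟨x, hx, y, hy, hxy, hfeq⟩ :=
    Finset.exists_ne_map_eq_of_card_lt_of_maps_to
      (f := fun w : List α => fun j : Fin k =>
        M.eval (w.take ((Finset.range (j + 1)).sum bl)))
      (t := (Finset.univ : Finset (Fin k → Q)))
      (by simpa using hcard)
      (fun a _ => Finset.mem_univ _)
  have hbd : ∀ j ≤ k, M.eval (x.take ((Finset.range j).sum bl))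
      = M.eval (y.take ((Finset.range j).sum bl)) := by
    intro j hj
    match j, hj with
    | 0, _ => simp
    | (j' + 1), hj => exact congrFun hfeq ⟨j', hj⟩
  refine ⟨x, hx, y, hy, hxy, fun j hj => ?_⟩
  set p := (Finset.range j).sum bl with hp
  have h1 : M.eval (x.take p) = M.eval (y.take p) := hbd j (le_of_lt hj)
  have h2 : M.eval (x.take (p + bl j)) = M.eval (y.take (p + bl j)) := by
    have := hbd (j + 1) hj
    rwa [Finset.sum_range_succ] at this
  have key : ∀ u v : List α, u ∈ M.accepts →
      M.eval (u.take p) = M.eval (v.take p) →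
      M.eval (u.take (p + bl j)) = M.eval (v.take (p + bl j)) →
      (u.take p ++ ((v.drop p).take (bl j)) ++ u.drop (p + bl j)) ∈ M.accepts := by
    intro u v hu e1 e2
    have heval : M.eval (u.take p ++ ((v.drop p).take (bl j)) ++ u.drop (p + bl j))
        = M.eval u := by
      have hmid : M.eval (u.take p ++ (v.drop p).take (bl j))
          = M.eval (u.take (p + bl j)) := by
        rw [show M.eval (u.take p ++ (v.drop p).take (bl j))
            = M.evalFrom (M.eval (u.take p)) ((v.drop p).take (bl j)) from
          M.evalFrom_of_append _ _ _, e1,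
          show M.evalFrom (M.eval (v.take p)) ((v.drop p).take (bl j))
            = M.eval (v.take p ++ (v.drop p).take (bl j)) from
          (M.evalFrom_of_append _ _ _).symm, ← List.take_add, e2.symm]
      calc M.eval (u.take p ++ ((v.drop p).take (bl j)) ++ u.drop (p + bl j))
          = M.evalFrom (M.eval (u.take p ++ (v.drop p).take (bl j)))
              (u.drop (p + bl j)) := M.evalFrom_of_append _ _ _
        _ = M.evalFrom (M.eval (u.take (p + bl j))) (u.drop (p + bl j)) := by
              rw [hmid]
        _ = M.eval (u.take (p + bl j) ++ u.drop (p + bl j)) :=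
              (M.evalFrom_of_append _ _ _).symm
        _ = M.eval u := by rw [List.take_append_drop]
    rw [DFA.mem_accepts] at hu ⊢
    rwa [heval]
  exact ⟨key x y (hS x hx).1 h1 h2, key y x (hS y hy).1 h1.symm h2.symm⟩
end

section
/- If a DFA M over the track alphabet Σ × Γ accepts, for every pair of equal-length strings, the paired string ⟨x, w⟩, then for any advice function h : ℕ → Γ* with |h(n)| = n, and any n, i ∈ [0,n], and any set T ⊆ Σ^n with |T| > |states of M| such that ⟨x, h(n)⟩ is accepted by M for all x ∈ T, there exist distinct x, y ∈ T such that M accepts both ⟨pref_i(x)suf_{n−i}(y), h(n)⟩ and ⟨pref_i(y)suf_{n−i}(x), h(n)⟩. -/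
/-- **Swapping lemma in the advised setting.**
Let `M` be a DFA over a track alphabet `Σ × Γ`, reading pairs `⟨x, w⟩` of
equal-length strings (encoded as `x.zip w`).  For any advice function
`h : ℕ → Γ*` with `|h n| = n`, any `n`, any `i ∈ [0, n]`, and any set
`T ⊆ Σⁿ` with `|T| > |Q|` such that `⟨x, h n⟩` is accepted by `M` for all
`x ∈ T`, there exist distinct `x, y ∈ T` such that `M` accepts both
`⟨pref_i(x) ++ suf_{n-i}(y), h n⟩` and `⟨pref_i(y) ++ suf_{n-i}(x), h n⟩`. -/
theorem swapping_lemma_regular_advice {α β Q : Type} [Fintype Q]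
    (M : DFA (α × β) Q)
    (h : ℕ → List β) (hlen : ∀ n, (h n).length = n)
    (n : ℕ) (i : ℕ) (hi : i ≤ n)
    (T : Finset (List α))
    (hT : ∀ x ∈ T, x.length = n ∧ (x.zip (h n)) ∈ M.accepts)
    (hcard : Fintype.card Q < T.card) :
    ∃ x ∈ T, ∃ y ∈ T, x ≠ y ∧
      ((x.take i ++ y.drop i).zip (h n)) ∈ M.accepts ∧
      ((y.take i ++ x.drop i).zip (h n)) ∈ M.accepts := by
  classical
  -- pigeonhole: state after reading first i track symbols
  set f : List α → Q := fun x =>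
    M.evalFrom M.start ((x.take i).zip ((h n).take i)) with hf
  have : ∃ x ∈ T, ∃ y ∈ T, x ≠ y ∧ f x = f y := by
    by_contra hcon
    push_neg at hcon
    have hinj : Set.InjOn f (T : Set (List α)) := by
      intro a ha b hb hab
      by_contra hne
      exact hcon a ha b hb hne hab
    have := Finset.card_le_card_of_injOn f (fun x _ => Finset.mem_univ (f x)) hinj
    simp at this
    omega
  obtain ⟨x, hx, y, hy, hxy, hfeq⟩ := this
  refine ⟨x, hx, y, hy, hxy, ?_, ?_⟩ <;>
  · -- split advice
    obtain ⟨hlx, hax⟩ := hT x hx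
    obtain ⟨hly, hay⟩ := hT y hy
    have hsplit : h n = (h n).take i ++ (h n).drop i := (List.take_append_drop i (h n)).symm
    have hzipx : ∀ a b : List α, a.length = n →
        ((a.take i ++ b.drop i).zip (h n)) =
        (a.take i).zip ((h n).take i) ++ (b.drop i).zip ((h n).drop i) := by
      intro a b hla
      conv_lhs => rw [hsplit]
      exact List.zip_append (by simp [hla, hlen, hi])
    have key : ∀ a b : List α, a ∈ T → b ∈ T → f a = f b →
        ((a.take i ++ b.drop i).zip (h n)) ∈ M.accepts := by
      intro a b ha hb hfab
      obtain ⟨hla, haa⟩ := hT a ha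
      obtain ⟨hlb, hab⟩ := hT b hb
      rw [DFA.mem_accepts] at hab ⊢
      rw [DFA.eval, hzipx a b hla, DFA.evalFrom_of_append]
      have hb' : b.zip (h n) = (b.take i).zip ((h n).take i) ++ (b.drop i).zip ((h n).drop i) := by
        conv_lhs => rw [← List.take_append_drop i b, hsplit]
        exact List.zip_append (by simp [hlb, hlen, hi])
      rw [DFA.eval, hb', DFA.evalFrom_of_append] at hab
      rwa [show M.evalFrom M.start ((a.take i).zip ((h n).take i)) =
        M.evalFrom M.start ((b.take i).zip ((h n).take i)) from hfab]
    first
    | exact key x y hx hy hfeq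
    | exact key y x hy hx hfeq.symm
end

section
/- The language Pal = {w w^R : w ∈ {0,1}*} of even-length binary palindromes is not in REG/n; i.e., there do not exist an advice function h : ℕ → Γ* with |h(n)| = n and a regular language L over {0,1} × Γ such that for all x ∈ {0,1}*, x ∈ Pal iff ⟨x, h(|x|)⟩ ∈ L. -/
/-- A language `P` over `σ` is in `REG/n` if there are a finite advice
alphabet `Γ`, an advice function `h : ℕ → Γ*` with `|h n| = n`, and a regular
language `L` over the track alphabet `σ × Γ` such that `x ∈ P` iff the track
string `⟨x, h(|x|)⟩` belongs to `L`. -/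
def InREGn {σ : Type} (P : Language σ) : Prop :=
  ∃ (Γ : Type) (_ : Fintype Γ) (h : ℕ → List Γ),
    (∀ n, (h n).length = n) ∧
    ∃ L : Language (σ × Γ), L.IsRegular ∧
      ∀ x : List σ, x ∈ P ↔ x.zip (h x.length) ∈ L

/-!
Since the advice depends only on the input length, all inputs `u ++ v` with `|u| = n` and
`|v| = m` share the advice `a ++ b` with `|a| = n`, and the automaton reaches the same state
after reading `⟨u, a⟩` for indistinguishable prefixes. Hence a language in `REG/n` has a
uniform bound, the number of states, on the size of any family of words of a fixed length that
are pairwise distinguished by suffixes of a fixed length. For `Pal` all `2ⁿ` words of length `n`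
form such a family: `w` is separated from every other word by the suffix `wᴿ`.
-/

theorem List.eq_of_append_reverse_eq_append_reverse {α : Type*} {u w v : List α}
    (hlen : u.length = w.length) (h : u ++ w.reverse = v ++ v.reverse) : u = w := by
  have hv : u.length = v.length := by
    have := congrArg List.length h
    simp only [List.length_append, List.length_reverse] at this
    omega
  obtain ⟨rfl, hwv⟩ := List.append_inj h hv
  exact (List.reverse_inj.mp hwv).symm

theorem DFA.evalFrom_zip_append {α Γ σ : Type*} (M : DFA (α × Γ) σ) (s : σ)
    {u v : List α} {a b : List Γ} (hlen : u.length = a.length) :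
    M.evalFrom s ((u ++ v).zip (a ++ b)) = M.evalFrom (M.evalFrom s (u.zip a)) (v.zip b) := by
  rw [List.zip_append hlen, DFA.evalFrom_of_append]

theorem InREGn.exists_card_le_of_distinguishable {σ : Type} {P : Language σ} (hP : InREGn P) :
    ∃ K : ℕ, ∀ (n m : ℕ) (ι : Type) [Fintype ι] (u : ι → List σ), (∀ i, (u i).length = n) →
      (∀ i j, i ≠ j → ∃ v : List σ, v.length = m ∧ u i ++ v ∈ P ∧ u j ++ v ∉ P) →
        Fintype.card ι ≤ K := by
  obtain ⟨Γ, _, h, hlen, _, ⟨Q, _, M, rfl⟩, hspec⟩ := hP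
  refine ⟨Fintype.card Q, fun n m ι _ u hu hdist => ?_⟩
  set a := (h (n + m)).take n
  set b := (h (n + m)).drop n
  have ha : a.length = n := by simp [a, hlen]
  have hmem : ∀ i (v : List σ), v.length = m →
      (u i ++ v ∈ P ↔ M.evalFrom (M.evalFrom M.start ((u i).zip a)) (v.zip b) ∈ M.accept) := by
    intro i v hv
    rw [hspec, List.length_append, hu, hv, ← List.take_append_drop n (h (n + m)),
      DFA.mem_accepts, DFA.eval, DFA.evalFrom_zip_append _ _ (by rw [hu, ha])]
  refine Fintype.card_le_of_injective (fun i => M.evalFrom M.start ((u i).zip a)) ?_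
  intro i j (hij : M.evalFrom M.start ((u i).zip a) = M.evalFrom M.start ((u j).zip a))
  by_contra hne
  obtain ⟨v, hv, hi, hj⟩ := hdist i j hne
  rw [hmem i v hv, hij, ← hmem j v hv] at hi
  exact hj hi

/-- The language `Pal = {w w^R : w ∈ {0,1}*}` of even-length binary
palindromes (over the alphabet `Bool`) is not in `REG/n`. -/
theorem pal_not_in_REGn :
    ¬ InREGn { x : List Bool | ∃ w : List Bool, x = w ++ w.reverse } := by
  intro hPal
  obtain ⟨K, hK⟩ := hPal.exists_card_le_of_distinguishable
  have hcard := hK K K (List.Vector Bool K) List.Vector.toList List.Vector.toList_length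
    fun w w' hne => ⟨w.toList.reverse, by simp, ⟨_, rfl⟩, fun ⟨_, h⟩ => hne
      (List.Vector.eq _ _ (List.eq_of_append_reverse_eq_append_reverse (by simp) h).symm)⟩
  rw [card_vector, Fintype.card_bool] at hcard
  exact (Nat.lt_two_pow_self).not_ge hcard
end

section
/- The language Equal = {w ∈ {0,1}* : the number of 0s in w equals the number of 1s in w} is not in REG/n; i.e., there is no advice function h with |h(n)| = n and no regular language L over a track alphabet such that for all x, x ∈ Equal iff ⟨x, h(|x|)⟩ ∈ L. -/
/-!
A DFA reading the track string `⟨x, a⟩` can only remember a bounded number of states, so among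
`N + 1` prefixes of the same length `m` (with `N` the number of states, and the advice fixed once
the total length `m + k` is) two lead to the same state and are then indistinguishable by every
suffix of length `k`. For `Equal`, the prefixes `0ⁱ1ᴺ⁻ⁱ` (`i ≤ N`) of length `N` are pairwise
distinguished by suffixes of length `N`: only `0ᴺ⁻ⁱ1ⁱ` completes `0ⁱ1ᴺ⁻ⁱ` to a word of `Equal`.
-/

theorem List.zip_append_left {α β : Type*} (u v : List α) (a : List β) :
    (u ++ v).zip a = u.zip (a.take u.length) ++ v.zip (a.drop u.length) := by
  induction u generalizing a with
  | nil => simp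
  | cons x u ih => cases a <;> simp [ih]

theorem InREGn.exists_ne_forall_mem_append_iff {σ : Type} {P : Language σ} (hP : InREGn P) :
    ∃ N : ℕ, ∀ (m k : ℕ) (u : Fin (N + 1) → List σ), (∀ i, (u i).length = m) →
      ∃ i j, i ≠ j ∧ ∀ v : List σ, v.length = k → (u i ++ v ∈ P ↔ u j ++ v ∈ P) := by
  obtain ⟨Γ, _, h, -, L, ⟨Q, _, M, rfl⟩, hiff⟩ := hP
  refine ⟨Fintype.card Q, fun m k u hu => ?_⟩
  set a := h (m + k)
  obtain ⟨i, j, hij, hstate⟩ :=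
    Fintype.exists_ne_map_eq_of_card_lt (fun i => M.eval ((u i).zip (a.take m))) (by simp)
  have htrack : ∀ i v, v.length = k →
      (u i ++ v ∈ P ↔ v.zip (a.drop m) ∈ M.acceptsFrom (M.eval ((u i).zip (a.take m)))) := by
    intro i v hv
    rw [hiff, List.length_append, hu, hv, List.zip_append_left, hu,
      ← Language.leftQuotient_accepts_apply, Language.mem_leftQuotient]
  exact ⟨i, j, hij, fun v hv => by rw [htrack i v hv, htrack j v hv, hstate]⟩

/-- The language `Equal = {w ∈ {0,1}* : #₀(w) = #₁(w)}` (binary strings with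
equally many `0`s and `1`s, `0` encoded as `false` and `1` as `true`)
is not in `REG/n`. -/
theorem equal_not_in_REGn :
    ¬ InREGn { x : List Bool | x.count false = x.count true } := by
  intro hP
  obtain ⟨N, hN⟩ := hP.exists_ne_forall_mem_append_iff
  obtain ⟨i, j, hij, hsame⟩ := hN N N
    (fun i => List.replicate i false ++ List.replicate (N - i) true) (fun i => by simp; omega)
  have hcompletes := hsame (List.replicate (N - i) false ++ List.replicate i true) (by simp; omega)
  change List.count false _ = List.count true _ ↔ List.count false _ = List.count true _
    at hcompletes
  simp [List.count_replicate] at hcompletes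
  have := Fin.val_ne_of_ne hij
  omega
end

section
/- The language GT = {w ∈ {0,1}* : #_0(w) > #_1(w)} is not in REG/n. -/
theorem DFA.append_mem_accepts_iff_of_eval_eq {α σ : Type*} (M : DFA α σ) {x y : List α}
    (h : M.eval x = M.eval y) (z : List α) : x ++ z ∈ M.accepts ↔ y ++ z ∈ M.accepts := by
  simp only [DFA.mem_accepts, DFA.eval, DFA.evalFrom_of_append] at h ⊢
  rw [h]

theorem InREGn.exists_lt_append_mem_iff {σ : Type} {P : Language σ} (hP : InREGn P) :
    ∃ N : ℕ, ∀ (m k : ℕ) (u : Fin (N + 1) → List σ), (∀ i, (u i).length = m) →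
      ∃ i j, i < j ∧ ∀ v : List σ, v.length = k → (u i ++ v ∈ P ↔ u j ++ v ∈ P) := by
  obtain ⟨Γ, _, h, hlen, L, ⟨Q, _, M, rfl⟩, hmem⟩ := hP
  refine ⟨Fintype.card Q, fun m k u hu => ?_⟩
  set a := h (m + k)
  have hzip : ∀ i (v : List σ), v.length = k →
      (u i ++ v).zip (h (u i ++ v).length) = (u i).zip (a.take m) ++ v.zip (a.drop m) := by
    intro i v hv
    rw [List.length_append, hu, hv, ← List.zip_append (by simp [a, hu, hlen]),
      List.take_append_drop]
  obtain ⟨i, j, hne, hstate⟩ := Fintype.exists_ne_map_eq_of_card_lt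
    (fun i => M.eval ((u i).zip (a.take m))) (by simp)
  have hindist : ∀ v : List σ, v.length = k → (u i ++ v ∈ P ↔ u j ++ v ∈ P) := by
    intro v hv
    rw [hmem, hmem, hzip i v hv, hzip j v hv]
    exact M.append_mem_accepts_iff_of_eval_eq hstate _
  rcases hne.lt_or_gt with hij | hji
  · exact ⟨i, j, hij, hindist⟩
  · exact ⟨j, i, hji, fun v hv => (hindist v hv).symm⟩

/-- The language `GT = {w ∈ {0,1}* : #₀(w) > #₁(w)}` (binary strings with
more `0`s than `1`s, `0` encoded as `false` and `1` as `true`)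
is not in `REG/n`. -/
theorem gt_not_in_REGn :
    ¬ InREGn { x : List Bool | x.count true < x.count false } := by
  intro hGT
  obtain ⟨N, hN⟩ := hGT.exists_lt_append_mem_iff
  obtain ⟨i, j, hij, hindist⟩ :=
    hN N N (fun i => List.replicate i false ++ List.replicate (N - i) true) (by simp; omega)
  have hsep := hindist (List.replicate (N - i) false ++ List.replicate i true) (by simp; omega)
  change List.count true _ < List.count false _ ↔ List.count true _ < List.count false _ at hsep
  simp [List.count_replicate] at hsep
  omega
end

section
/- The language Pal = {w w^R : w ∈ {0,1}*} belongs to DCFL/n: there exist an advice function h with |h(n)| = n and a deterministic context-free language L over a track alphabet such that for all x ∈ {0,1}*, x ∈ Pal iff ⟨x, h(|x|)⟩ ∈ L. An explicit choice is h(0) = λ, h(n) = 0^{n/2−1}101^{n/2−1} for even n ≥ 2, and h(n) = 1ⁿ for odd n, where the advice marks the midpoint so a deterministic pushdown automaton can simulate recognition of {w#w^R : w ∈ {0,1}*}. -/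
/-- A deterministic pushdown automaton (with ε-moves), with state type `Q`,
input alphabet `α` and stack alphabet `Γ`. -/
structure DPDA (α Q Γ : Type) where
  start : Q
  startSym : Γ
  step : Q → Option α → Γ → Option (Q × List Γ)
  final : Set Q
  deterministic : ∀ q γ, (step q none γ).isSome → ∀ a, step q (some a) γ = none

/-- `M.Steps c x c'` : the DPDA `M` can go from configuration `c`
(state, stack) to configuration `c'` while consuming the input string `x`. -/
inductive DPDA.Steps {α Q Γ : Type} (M : DPDA α Q Γ) :
    Q × List Γ → List α → Q × List Γ → Prop
  | refl (c) : DPDA.Steps M c [] c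
  | read {q a t s q' u w c} : M.step q (some a) t = some (q', u) →
      DPDA.Steps M (q', u ++ s) w c → DPDA.Steps M (q, t :: s) (a :: w) c
  | eps {q t s q' u w c} : M.step q none t = some (q', u) →
      DPDA.Steps M (q', u ++ s) w c → DPDA.Steps M (q, t :: s) w c

/-- The language accepted by a DPDA (by final state). -/
def DPDA.accepts {α Q Γ : Type} (M : DPDA α Q Γ) : Language α :=
  { x | ∃ q s, M.Steps (M.start, [M.startSym]) x (q, s) ∧ q ∈ M.final }

/-- A deterministic context-free language: one accepted by a DPDA with
finitely many states and stack symbols. -/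
def IsDCFL {σ : Type} (P : Language σ) : Prop :=
  ∃ (Q Γ : Type) (_ : Fintype Q) (_ : Fintype Γ) (M : DPDA σ Q Γ),
    M.accepts = P

/-- `DCFL/n`: deterministic context-free languages with length-respecting
advice. -/
def InDCFLn {σ : Type} (P : Language σ) : Prop :=
  ∃ (Γ : Type) (_ : Fintype Γ) (h : ℕ → List Γ),
    (∀ n, (h n).length = n) ∧
    ∃ L : Language (σ × Γ), IsDCFL L ∧
      ∀ x : List σ, x ∈ P ↔ x.zip (h x.length) ∈ L

/-! The advice `0^⌊n/2⌋ 1^⌈n/2⌉` tells the automaton where the middle is: it pushes the input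
while the advice bit is `0` and pops, comparing, while it is `1`. So the tagged words it
accepts are exactly the words `w w^R` tagged at their midpoint. For the converse, every
accepting run from a configuration `(q, stack u)` reads a word of `residual q u`, which is
checked one transition at a time. -/

theorem List.zip_replicate_length {α β : Type} (l : List α) (b : β) :
    l.zip (List.replicate l.length b) = l.map (·, b) := by
  induction l with
  | nil => rfl
  | cons a l ih => simp [List.replicate_succ, ih]

namespace Pal

def markHalves (w : List Bool) : List (Bool × Bool) :=
  w.map (·, false) ++ w.reverse.map (·, true)

def halfAdvice (n : ℕ) : List Bool :=
  List.replicate (n / 2) false ++ List.replicate (n - n / 2) true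

lemma length_halfAdvice (n : ℕ) : (halfAdvice n).length = n := by
  simp [halfAdvice]; omega

lemma zip_halfAdvice (w : List Bool) :
    (w ++ w.reverse).zip (halfAdvice (w ++ w.reverse).length) = markHalves w := by
  have hhalf : (w.length + w.length) / 2 = w.length := by omega
  simp only [halfAdvice, List.length_append, List.length_reverse, hhalf,
    Nat.add_sub_cancel]
  rw [List.zip_append (by simp), List.zip_replicate_length,
    ← List.length_reverse (as := w), List.zip_replicate_length, markHalves]

lemma map_fst_markHalves (w : List Bool) : (markHalves w).map Prod.fst = w ++ w.reverse := by
  simp [markHalves, Function.comp_def]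

inductive State | start | push | pop | accept
  deriving DecidableEq

open State

instance : Fintype State := ⟨{start, push, pop, accept}, fun x => by cases x <;> simp⟩

/-- Input letters are `(bit, advice)`; the advice bit is `true` exactly on the second half. -/
def step : State → Option (Bool × Bool) → Option Bool → Option (State × List (Option Bool))
  | start, some (a, false), none => some (push, [some a, none])
  | push, some (a, false), some b => some (push, [some a, some b])
  | push, some (a, true), some b => if a = b then some (pop, []) else none
  | pop, some (a, true), some b => if a = b then some (pop, []) else none
  | pop, none, none => some (accept, [none])
  | _, _, _ => none

def dpda : DPDA (Bool × Bool) State (Option Bool) where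
  start := start
  startSym := none
  step := step
  final := {start, accept}
  deterministic := by decide

def stack (u : List Bool) : List (Option Bool) := u.map some ++ [none]

lemma steps_pop (u : List Bool) :
    dpda.Steps (pop, stack u) (u.map (·, true)) (accept, stack []) := by
  induction u with
  | nil => exact .eps (s := []) rfl (.refl _)
  | cons a u ih => exact .read (u := []) (by simp [dpda, step]) ih

lemma steps_push_pop (v : List Bool) (b : Bool) (u : List Bool) :
    dpda.Steps (push, stack (b :: u))
      (v.map (·, false) ++ (v.reverse ++ b :: u).map (·, true)) (accept, stack []) := by
  induction v generalizing b u with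
  | nil => exact .read (q' := pop) (u := []) (by simp [dpda, step]) (steps_pop u)
  | cons a v ih =>
    refine .read (q' := push) (u := [some a, some b]) (by simp [dpda, step]) ?_
    simpa [stack] using ih a (b :: u)

lemma markHalves_mem_accepts (w : List Bool) : markHalves w ∈ dpda.accepts := by
  rcases w with _ | ⟨a, v⟩
  · exact ⟨start, _, .refl _, by simp [dpda]⟩
  refine ⟨accept, stack [], ?_, by simp [dpda]⟩
  refine .read (q' := push) (u := [some a, none]) (by simp [dpda, step]) ?_
  simpa [markHalves, stack] using steps_push_pop v a []

def residual : State → List Bool → Set (List (Bool × Bool))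
  | start, _ => Set.range markHalves
  | push, u => {y | ∃ v : List Bool, y = v.map (·, false) ++ (v.reverse ++ u).map (·, true)}
  | pop, u => {u.map (·, true)}
  | accept, _ => {[]}

lemma cons_mem_residual {q q' : State} {a : Bool × Bool} {t : Option Bool}
    {s out : List (Option Bool)} {u : List Bool} {y : List (Bool × Bool)}
    (hstep : step q (some a) t = some (q', out)) (hs : t :: s = stack u)
    (hy : ∀ u', out ++ s = stack u' → y ∈ residual q' u') :
    a :: y ∈ residual q u := by
  obtain ⟨a, adv⟩ := a
  cases u with
  | nil =>
    obtain ⟨rfl, rfl⟩ : t = none ∧ s = [] := by simpa [stack] using hs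
    cases q <;> cases adv <;> simp [step] at hstep
    obtain ⟨rfl, rfl⟩ := hstep
    obtain ⟨v, rfl⟩ := hy [a] rfl
    exact ⟨a :: v, by simp [markHalves]⟩
  | cons b u =>
    obtain ⟨rfl, rfl⟩ : t = some b ∧ s = stack u := by simpa [stack] using hs
    cases q <;> cases adv <;> simp [step] at hstep
    · obtain ⟨rfl, rfl⟩ := hstep
      obtain ⟨v, rfl⟩ := hy (a :: b :: u) rfl
      exact ⟨a :: v, by simp⟩
    · obtain ⟨rfl, rfl, rfl⟩ := hstep
      exact ⟨[], by simpa [residual] using hy u rfl⟩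
    · obtain ⟨rfl, rfl, rfl⟩ := hstep
      simpa [residual] using hy u rfl

lemma mem_residual_of_eps {q q' : State} {t : Option Bool} {s out : List (Option Bool)}
    {u : List Bool} {y : List (Bool × Bool)}
    (hstep : step q none t = some (q', out)) (hs : t :: s = stack u)
    (hy : ∀ u', out ++ s = stack u' → y ∈ residual q' u') :
    y ∈ residual q u := by
  cases q <;> cases t <;> simp [step] at hstep
  obtain ⟨rfl, rfl⟩ := hstep
  obtain ⟨rfl, rfl⟩ : u = [] ∧ s = [] := by cases u <;> simp_all [stack]
  simpa [residual] using hy [] rfl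

lemma mem_residual_of_steps {c c' : State × List (Option Bool)} {y : List (Bool × Bool)}
    (h : dpda.Steps c y c') (hc' : c'.1 ∈ dpda.final) {q : State} {u : List Bool}
    (hc : c = (q, stack u)) : y ∈ residual q u := by
  induction h generalizing q u with
  | refl =>
    subst hc
    rcases hc' with rfl | rfl
    exacts [⟨[], rfl⟩, rfl]
  | read hstep _ ih =>
    obtain ⟨rfl, hs⟩ := Prod.mk.inj hc
    exact cons_mem_residual hstep hs fun _ h ↦ ih hc' (by rw [h])
  | eps hstep _ ih =>
    obtain ⟨rfl, hs⟩ := Prod.mk.inj hc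
    exact mem_residual_of_eps hstep hs fun _ h ↦ ih hc' (by rw [h])

theorem accepts_dpda : dpda.accepts = Set.range markHalves := by
  ext x
  refine ⟨fun ⟨_, _, h, hf⟩ ↦ mem_residual_of_steps h hf (u := []) rfl, ?_⟩
  rintro ⟨w, rfl⟩
  exact markHalves_mem_accepts w

end Pal

open Pal in
/-- The language `Pal = {w w^R : w ∈ {0,1}*}` of even-length binary
palindromes belongs to `DCFL/n`. -/
theorem pal_in_DCFLn :
    InDCFLn { x : List Bool | ∃ w : List Bool, x = w ++ w.reverse } := by
  refine ⟨Bool, inferInstance, halfAdvice, length_halfAdvice, dpda.accepts,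
    ⟨_, _, inferInstance, inferInstance, dpda, rfl⟩, fun x ↦ ?_⟩
  rw [accepts_dpda]
  constructor
  · rintro ⟨w, rfl⟩
    exact ⟨w, (zip_halfAdvice w).symm⟩
  · rintro ⟨w, hw⟩
    refine ⟨w, ?_⟩
    rw [← map_fst_markHalves, hw, List.map_fst_zip (by rw [length_halfAdvice])]
end

section
/- Swapping Lemma for Context-Free Languages: Let L be an infinite context-free language over an alphabet Σ with |Σ| ≥ 2. There is a positive constant m such that the following holds. For any n ≥ 2, any subset S ⊆ L ∩ Σⁿ, and any indices j₀, k ∈ [2, n] with k ≥ 2j₀, if |S_{i,u}| < |S| / (m(k−j₀+1)(n−j₀+1)) for every i ∈ [1, n−j₀] and every u ∈ Σ^{j₀}, then there exist indices i ∈ [1,n] and j ∈ [j₀, k] with i + j ≤ n and two strings x = x₁x₂x₃ and y = y₁y₂y₃ in S with |x₁| = |y₁| = i, |x₂| = |y₂| = j, |x₃| = |y₃| such that (i) x₂ ≠ y₂, (ii) x₁y₂x₃ ∈ L, and (iii) y₁x₂y₃ ∈ L. -/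
/-!
In a derivation tree of a word `x` with `|x| > k`, walk down from the root along children whose
yield is longer than `k`. At the last such node a run `β` of consecutive children yields a block
`x₂` of `x = x₁ x₂ x₃` with `j₀ ≤ |x₂| ≤ k`, so that `S ⇒* x₁ β x₃` and `β ⇒* x₂`; being an infix of
a right-hand side, `β` ranges over a finite set. Two words with the same `β` at the same position
can exchange their blocks. The run can be chosen so that the block does not start the word or is
longer than `j₀`; in the second case its first letter is cut off and recorded instead. Labelling
each word of `S` this way uses at most `m (k - j₀ + 1) (n - j₀ + 1)` labels, so some label class is
larger than every `S_{i,u}` and therefore contains two words with different blocks.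
-/

namespace ContextFreeGrammar

variable {T : Type*} {g : ContextFreeGrammar T}

theorem Derives.append {α β γ δ : List (Symbol T g.NT)} (hαβ : g.Derives α β)
    (hγδ : g.Derives γ δ) : g.Derives (α ++ γ) (β ++ δ) :=
  (hαβ.append_right γ).trans (hγδ.append_left β)

theorem produces_input_output {r : ContextFreeRule T g.NT} (hr : r ∈ g.rules) :
    g.Produces [.nonterminal r.input] r.output :=
  ⟨r, hr, .input_output⟩

/-- Derivation forests: `α ⇒* w` with the tree structure of the derivation available for
induction. -/
inductive Yields (g : ContextFreeGrammar T) : List (Symbol T g.NT) → List T → Prop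
  | nil : Yields g [] []
  | terminal (a : T) {α : List (Symbol T g.NT)} {w : List T} :
      Yields g α w → Yields g (.terminal a :: α) (a :: w)
  | nonterminal {r : ContextFreeRule T g.NT} (hr : r ∈ g.rules) {u : List T}
      {α : List (Symbol T g.NT)} {v : List T} :
      Yields g r.output u → Yields g α v → Yields g (.nonterminal r.input :: α) (u ++ v)

theorem Yields.derives {α : List (Symbol T g.NT)} {w : List T} (h : g.Yields α w) :
    g.Derives α (w.map .terminal) := by
  induction h with
  | nil => exact Derives.refl _
  | terminal a _ ih => exact ih.append_left [.terminal a]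
  | nonterminal hr _ _ ihu ihv =>
    rw [List.map_append]
    exact ((produces_input_output hr).append_right _).trans_derives (ihu.append ihv)

theorem yields_map_terminal (w : List T) : g.Yields (w.map .terminal) w := by
  induction w with
  | nil => exact .nil
  | cons a w ih => exact .terminal a ih

theorem yields_append_iff {α β : List (Symbol T g.NT)} {w : List T} :
    g.Yields (α ++ β) w ↔ ∃ u v, w = u ++ v ∧ g.Yields α u ∧ g.Yields β v := by
  constructor
  · induction α generalizing w with
    | nil => exact fun h => ⟨[], w, rfl, .nil, h⟩
    | cons s α ih =>
      intro h
      cases h with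
      | terminal a h =>
        obtain ⟨u, v, rfl, hu, hv⟩ := ih h
        exact ⟨a :: u, v, rfl, .terminal a hu, hv⟩
      | nonterminal hr hr' h =>
        obtain ⟨u, v, rfl, hu, hv⟩ := ih h
        exact ⟨_ ++ u, v, (List.append_assoc _ _ _).symm, .nonterminal hr hr' hu, hv⟩
  · rintro ⟨u, v, rfl, hu, hv⟩
    induction hu with
    | nil => exact hv
    | terminal a _ ih => exact .terminal a ih
    | nonterminal hr hr' _ _ ih => simpa using Yields.nonterminal hr hr' ih

theorem Yields.of_produces {α β : List (Symbol T g.NT)} {w : List T} (hαβ : g.Produces α β)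
    (h : g.Yields β w) : g.Yields α w := by
  obtain ⟨r, hr, hrw⟩ := hαβ
  obtain ⟨p, q, rfl, rfl⟩ := hrw.exists_parts
  obtain ⟨u, v, rfl, hp, hv⟩ := yields_append_iff.1 (by simpa using h)
  obtain ⟨v, v', rfl, ho, hq⟩ := yields_append_iff.1 hv
  simpa using yields_append_iff.2 ⟨u, v ++ v', rfl, hp, .nonterminal hr ho hq⟩

theorem Derives.yields {α : List (Symbol T g.NT)} {w : List T}
    (h : g.Derives α (w.map .terminal)) : g.Yields α w := by
  induction h using Relation.ReflTransGen.head_induction_on with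
  | refl => exact yields_map_terminal w
  | head hp _ ih => exact ih.of_produces hp

theorem exists_yields_output_of_mem_language {w : List T} (hw : w ∈ g.language) :
    ∃ r ∈ g.rules, r.input = g.initial ∧ g.Yields r.output w := by
  have h := ((mem_language_iff g w).1 hw).yields
  generalize hS : [Symbol.nonterminal g.initial] = S at h
  cases h with
  | nil => cases hS
  | terminal => cases hS
  | nonterminal hr ho hnil =>
    obtain ⟨hin, rfl⟩ : g.initial = _ ∧ [] = _ := by simpa using hS
    cases hnil
    exact ⟨_, hr, hin.symm, by simpa using ho⟩

variable (g) in
def rhsInfixes : Set (List (Symbol T g.NT)) :=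
  {β | ∃ r ∈ g.rules, β <:+: r.output}

variable (g) in
theorem finite_rhsInfixes : g.rhsInfixes.Finite := by
  classical
  refine (g.rules.biUnion fun r => r.output.sublists.toFinset).finite_toSet.subset ?_
  rintro β ⟨r, hr, hβ⟩
  simpa using ⟨r, hr, hβ.sublist⟩

theorem mem_rhsInfixes_of_isInfix {β γ : List (Symbol T g.NT)} (hβγ : β <:+: γ)
    (hγ : γ ∈ g.rhsInfixes) : β ∈ g.rhsInfixes := by
  obtain ⟨r, hr, hγ⟩ := hγ
  exact ⟨r, hr, hβγ.trans hγ⟩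

variable (g) in
/-- The disjunction lets the block `w₂` be moved off position `0`, if need be by cutting off its
first letter; its last alternative, for short `w`, only serves the induction. -/
def HasPocket (j₀ k : ℕ) (α : List (Symbol T g.NT)) (w : List T) : Prop :=
  ∃ β ∈ g.rhsInfixes, ∃ w₁ w₂ w₃ : List T, w = w₁ ++ w₂ ++ w₃ ∧
    j₀ ≤ w₂.length ∧ w₂.length ≤ k ∧ (1 ≤ w₁.length ∨ j₀ < w₂.length ∨ w.length ≤ k) ∧
    g.Derives α (w₁.map .terminal ++ β ++ w₃.map .terminal) ∧ g.Derives β (w₂.map .terminal)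

theorem HasPocket.of_produces {j₀ k : ℕ} {α α' : List (Symbol T g.NT)} {w : List T}
    (hαα' : g.Produces α α') (h : g.HasPocket j₀ k α' w) : g.HasPocket j₀ k α w := by
  obtain ⟨β, hβ, w₁, w₂, w₃, hw, h₁, h₂, hpos, hα', hβw⟩ := h
  exact ⟨β, hβ, w₁, w₂, w₃, hw, h₁, h₂, hpos, hαα'.trans_derives hα', hβw⟩

theorem hasPocket_cons {j₀ k : ℕ} (hk : 2 * j₀ ≤ k + 1) {s : Symbol T g.NT}
    {α : List (Symbol T g.NT)} {u v : List T} (hsα : s :: α ∈ g.rhsInfixes)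
    (hs : g.Derives [s] (u.map .terminal)) (hα : g.Derives α (v.map .terminal))
    (ihs : k < u.length → g.HasPocket j₀ k [s] u) (ihα : j₀ ≤ v.length → g.HasPocket j₀ k α v)
    (huv : j₀ ≤ u.length + v.length) : g.HasPocket j₀ k (s :: α) (u ++ v) := by
  by_cases hv : j₀ ≤ v.length
  · obtain ⟨β, hβ, w₁, w₂, w₃, rfl, h₁, h₂, hpos, hαβ, hβw⟩ := ihα hv
    refine ⟨β, hβ, u ++ w₁, w₂, w₃, by simp, h₁, h₂, ?_, ?_, hβw⟩
    · simp only [List.length_append] at hpos ⊢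
      omega
    · simpa using hs.append hαβ
  by_cases hshort : u.length + v.length ≤ k
  · refine ⟨s :: α, hsα, [], u ++ v, [], by simp, by simpa using huv, by simpa using hshort,
      by simp [hshort], by simpa using Derives.refl (s :: α), by simpa using hs.append hα⟩
  by_cases hu : u.length ≤ k
  -- `|u| > k - |v| ≥ k + 1 - j₀ ≥ j₀`
  · exact ⟨[s], mem_rhsInfixes_of_isInfix ⟨[], α, rfl⟩ hsα, [], u, v, by simp, by omega, hu,
      by omega, by simpa using (Derives.refl [s]).append hα, hs⟩
  · obtain ⟨β, hβ, w₁, w₂, w₃, rfl, h₁, h₂, hpos, hsβ, hβw⟩ := ihs (by omega)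
    refine ⟨β, hβ, w₁, w₂, w₃ ++ v, by simp, h₁, h₂, ?_, by simpa using hsβ.append hα, hβw⟩
    simp only [List.length_append] at hpos hu ⊢
    omega

theorem Yields.hasPocket {j₀ k : ℕ} (hj₀ : 1 ≤ j₀) (hk : 2 * j₀ ≤ k + 1)
    {α : List (Symbol T g.NT)} {w : List T} (h : g.Yields α w) (hα : α ∈ g.rhsInfixes)
    (hw : j₀ ≤ w.length) : g.HasPocket j₀ k α w := by
  induction h with
  | nil => simp at hw; omega
  | terminal a hα' ih =>
    exact hasPocket_cons (u := [a]) hk hα (Derives.refl _) hα'.derives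
      (fun ha => by simp at ha; omega)
      (fun hv => ih (mem_rhsInfixes_of_isInfix (List.suffix_cons _ _).isInfix hα) hv)
      (by simp at hw ⊢; omega)
  | nonterminal hr hu hv ihu ihv =>
    exact hasPocket_cons hk hα ((produces_input_output hr).trans_derives hu.derives) hv.derives
      (fun hku => (ihu ⟨_, hr, List.infix_refl _⟩ (by omega)).of_produces
        (produces_input_output hr))
      (fun hv => ihv (mem_rhsInfixes_of_isInfix (List.suffix_cons _ _).isInfix hα) hv)
      (by simpa using hw)

theorem hasPocket_of_mem_language {j₀ k : ℕ} (hj₀ : 1 ≤ j₀) (hk : 2 * j₀ ≤ k + 1) {w : List T}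
    (hw : w ∈ g.language) (hkw : k < w.length) :
    g.HasPocket j₀ k [.nonterminal g.initial] w := by
  obtain ⟨r, hr, hS, ho⟩ := exists_yields_output_of_mem_language hw
  rw [← hS]
  exact (ho.hasPocket hj₀ hk ⟨r, hr, List.infix_refl _⟩ (by omega)).of_produces
    (produces_input_output hr)

variable (g) in
/-- The letters `p` are generated by `β` but lie outside the swapped block `x₂`, so that the block
need not start where the yield of `β` does. -/
def IsSwapSite (β : List (Symbol T g.NT)) (p : List T) (i j : ℕ) (x : List T) : Prop :=
  ∃ x₁ x₂ x₃ : List T, x = x₁ ++ p ++ x₂ ++ x₃ ∧ (x₁ ++ p).length = i ∧ x₂.length = j ∧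
    g.Derives [.nonterminal g.initial] (x₁.map .terminal ++ β ++ x₃.map .terminal) ∧
    g.Derives β ((p ++ x₂).map .terminal)

theorem IsSwapSite.add_le_length {β : List (Symbol T g.NT)} {p x : List T} {i j : ℕ}
    (h : g.IsSwapSite β p i j x) : i + j ≤ x.length := by
  obtain ⟨x₁, x₂, x₃, rfl, rfl, rfl, -⟩ := h
  simp only [List.length_append]
  omega

theorem IsSwapSite.swap_mem_language {β : List (Symbol T g.NT)} {p x y : List T} {i j : ℕ}
    (hx : g.IsSwapSite β p i j x) (hy : g.IsSwapSite β p i j y) :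
    x.take i ++ (y.drop i).take j ++ x.drop (i + j) ∈ g.language := by
  obtain ⟨x₁, x₂, x₃, rfl, hi, rfl, hS, -⟩ := hx
  obtain ⟨y₁, y₂, y₃, rfl, hi', hj, -, hβ⟩ := hy
  have hx₁ : (x₁ ++ p ++ x₂ ++ x₃).take i = x₁ ++ p := by
    rw [List.append_assoc, List.take_left' hi]
  have hy₂ : ((y₁ ++ p ++ y₂ ++ y₃).drop i).take x₂.length = y₂ := by
    rw [List.append_assoc, List.drop_left' hi', List.take_left' hj]
  have hx₃ : (x₁ ++ p ++ x₂ ++ x₃).drop (i + x₂.length) = x₃ := by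
    rw [List.drop_left' (by simp only [← hi, List.length_append, Nat.add_assoc])]
  rw [hx₁, hy₂, hx₃, mem_language_iff]
  simpa using hS.trans ((hβ.append_left _).append_right _)

theorem HasPocket.exists_isSwapSite {j₀ k : ℕ} {x : List T}
    (h : g.HasPocket j₀ k [.nonterminal g.initial] x) (hkx : k < x.length) :
    ∃ β ∈ g.rhsInfixes, ∃ (c : Option T) (i j : ℕ),
      1 ≤ i ∧ j₀ ≤ j ∧ j ≤ k ∧ g.IsSwapSite β c.toList i j x := by
  obtain ⟨β, hβ, w₁, w₂, w₃, rfl, h₁, h₂, hpos, hS, hβw⟩ := h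
  rcases hpos with hpos | hpos | hpos
  · exact ⟨β, hβ, none, w₁.length, w₂.length, hpos, h₁, h₂, w₁, w₂, w₃, by simp, by simp, rfl,
      hS, hβw⟩
  · obtain ⟨a, w₂, rfl⟩ := List.exists_cons_of_length_pos (by omega : 0 < w₂.length)
    simp only [List.length_cons] at h₁ h₂ hpos
    exact ⟨β, hβ, some a, w₁.length + 1, w₂.length, by omega, by omega, by omega,
      w₁, w₂, w₃, by simp, by simp, rfl, hS, hβw⟩
  · omega

end ContextFreeGrammar

open Finset

theorem exists_ne_infix_of_card_filter_mul_lt {σ ι : Type*} [DecidableEq σ]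
    {S : Finset (List σ)} {n j₀ : ℕ} (B : Finset (ι × ℕ × ℕ)) (R : ι → ℕ → ℕ → List σ → Prop)
    (hS : ∀ x ∈ S, x.length = n) (hSne : S.Nonempty)
    (hB : ∀ a i j, (a, i, j) ∈ B → 1 ≤ i ∧ i ≤ n - j₀ ∧ j₀ ≤ j)
    (hR : ∀ x ∈ S, ∃ a i j, (a, i, j) ∈ B ∧ R a i j x)
    (H : ∀ i, 1 ≤ i → i ≤ n - j₀ → ∀ u : List σ, u.length = j₀ →
      #{x ∈ S | (x.drop i).take j₀ = u} * #B < #S) :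
    ∃ a i j, (a, i, j) ∈ B ∧ ∃ x ∈ S, ∃ y ∈ S,
      R a i j x ∧ R a i j y ∧ (x.drop i).take j ≠ (y.drop i).take j := by
  classical
  by_contra! hsame
  let C : ι × ℕ × ℕ → Finset (List σ) := fun b => {x ∈ S | R b.1 b.2.1 b.2.2 x}
  have hC : ∀ b ∈ B, #(C b) * #B < #S := by
    rintro ⟨a, i, j⟩ hb
    obtain ⟨hi, hin, hj⟩ := hB a i j hb
    obtain hempty | ⟨x₀, hx₀⟩ := (C (a, i, j)).eq_empty_or_nonempty
    · simpa [hempty] using hSne.card_pos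
    obtain ⟨hx₀S, hx₀R⟩ := mem_filter.1 hx₀
    refine lt_of_le_of_lt (Nat.mul_le_mul_right _ (card_le_card fun x hx => ?_))
      (H i hi hin ((x₀.drop i).take j₀) (by simp [hS x₀ hx₀S]; omega))
    obtain ⟨hxS, hxR⟩ := mem_filter.1 hx
    have hxj := congrArg (List.take j₀) (hsame a i j hb x hxS x₀ hx₀S hxR hx₀R)
    simp only [List.take_take, Nat.min_eq_left hj] at hxj
    exact mem_filter.2 ⟨hxS, hxj⟩
  have hBne : B.Nonempty := by
    obtain ⟨x, hx⟩ := hSne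
    obtain ⟨a, i, j, hb, -⟩ := hR x hx
    exact ⟨_, hb⟩
  have hcover : #S ≤ ∑ b ∈ B, #(C b) := by
    refine (card_le_card fun x hx => ?_).trans card_biUnion_le
    obtain ⟨a, i, j, hb, hxR⟩ := hR x hx
    exact mem_biUnion.2 ⟨_, hb, mem_filter.2 ⟨hx, hxR⟩⟩
  have := calc #S * #B ≤ ∑ b ∈ B, #(C b) * #B := by rw [← sum_mul]; gcongr
    _ < ∑ b ∈ B, #S := sum_lt_sum_of_nonempty hBne hC
    _ = #S * #B := by rw [sum_const, smul_eq_mul, mul_comm]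
  exact this.false

theorem swapping_lemma_contextFree_general {σ : Type} [Fintype σ] [DecidableEq σ]
    (hσ : 2 ≤ Fintype.card σ)
    (L : Language σ) (hL : L.IsContextFree) :
    ∃ m : ℕ, 0 < m ∧
      ∀ n : ℕ, 2 ≤ n →
      ∀ S : Finset (List σ), (∀ x ∈ S, x ∈ L ∧ x.length = n) →
      ∀ j₀ k : ℕ, 2 ≤ j₀ → j₀ ≤ n → 2 * j₀ ≤ k → k ≤ n →
      (∀ i : ℕ, 1 ≤ i → i ≤ n - j₀ → ∀ u : List σ, u.length = j₀ →
        (S.filter (fun x : List σ => (x.drop i).take j₀ = u)).card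
            * (m * (k - j₀ + 1) * (n - j₀ + 1)) < S.card) →
      ∃ i j : ℕ, 1 ≤ i ∧ i ≤ n ∧ j₀ ≤ j ∧ j ≤ k ∧ i + j ≤ n ∧
        ∃ x ∈ S, ∃ y ∈ S,
          (x.drop i).take j ≠ (y.drop i).take j ∧
          (x.take i ++ (y.drop i).take j ++ x.drop (i + j)) ∈ L ∧
          (y.take i ++ (x.drop i).take j ++ y.drop (i + j)) ∈ L := by
  obtain ⟨g, rfl⟩ := hL
  set P := g.finite_rhsInfixes.toFinset
  refine ⟨#P * (Fintype.card σ + 1) + 1, by omega, fun n hn S hS j₀ k hj₀ _ hk hkn H => ?_⟩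
  -- a word is labelled by the infix `β`, the letter cut off (if any), and its block's position
  let B := (P ×ˢ (univ : Finset (Option σ))) ×ˢ Icc 1 (n - j₀) ×ˢ Icc j₀ k
  have hB : #B ≤ (#P * (Fintype.card σ + 1) + 1) * (k - j₀ + 1) * (n - j₀ + 1) := by
    simp only [B, card_product, card_univ, Fintype.card_option, Nat.card_Icc, ← mul_assoc]
    rw [mul_right_comm _ (k - j₀ + 1)]
    exact Nat.mul_le_mul (Nat.mul_le_mul (Nat.le_succ _) (by omega)) (by omega)
  have hsites : ∀ x ∈ S, ∃ βc i j, (βc, i, j) ∈ B ∧ g.IsSwapSite βc.1 βc.2.toList i j x := by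
    intro x hx
    obtain ⟨hxL, hxn⟩ := hS x hx
    have hpocket := ContextFreeGrammar.hasPocket_of_mem_language (j₀ := j₀) (k := min k (n - 1))
      (by omega) (by omega) hxL (by omega)
    obtain ⟨β, hβ, c, i, j, hi, hj, hjk, hsite⟩ := hpocket.exists_isSwapSite (by omega)
    have := hsite.add_le_length
    exact ⟨(β, c), i, j, by simp [B, P, hβ]; omega, hsite⟩
  have hSne : S.Nonempty := by
    obtain ⟨a⟩ : Nonempty σ := Fintype.card_pos_iff.mp (by omega)
    have := H 1 le_rfl (by omega) (List.replicate j₀ a) (by simp)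
    exact card_pos.mp (by omega)
  obtain ⟨⟨β, c⟩, i, j, hb, x, hx, y, hy, hxs, hys, hne⟩ :=
    exists_ne_infix_of_card_filter_mul_lt B (fun βc i j x => g.IsSwapSite βc.1 βc.2.toList i j x)
      (fun x hx => (hS x hx).2) hSne (fun _ i j hb => by simp [B] at hb; omega) hsites
      (fun i hi hin u hu => (Nat.mul_le_mul_left _ hB).trans_lt (H i hi hin u hu))
  have := hxs.add_le_length
  have := (hS x hx).2
  simp only [B, mem_product, mem_Icc] at hb
  exact ⟨i, j, by omega, by omega, by omega, by omega, by omega, x, hx, y, hy, hne,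
    hxs.swap_mem_language hys, hys.swap_mem_language hxs⟩

/-- **Swapping Lemma for context-free languages.**
Let `L` be an infinite context-free language over a finite alphabet `σ` with
`|σ| ≥ 2`.  There is a constant `m > 0` such that for every `n ≥ 2`, every
`S ⊆ L ∩ σⁿ`, and all indices `j₀, k ∈ [2, n]` with `k ≥ 2j₀`: if
`|S_{i,u}| < |S| / (m(k-j₀+1)(n-j₀+1))` for every `i ∈ [1, n-j₀]` and every
`u ∈ σ^{j₀}` (where `S_{i,u} = {x ∈ S : midd_{i,i+j₀}(x) = u}`; the division
is expressed multiplicatively), then there exist `i ∈ [1,n]` and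
`j ∈ [j₀, k]` with `i + j ≤ n` and strings `x, y ∈ S` whose decompositions
`x = x₁x₂x₃`, `y = y₁y₂y₃` with `|x₁| = |y₁| = i`, `|x₂| = |y₂| = j` satisfy
`x₂ ≠ y₂`, `x₁y₂x₃ ∈ L` and `y₁x₂y₃ ∈ L`. -/
theorem swapping_lemma_contextFree {σ : Type} [Fintype σ] [DecidableEq σ]
    (hσ : 2 ≤ Fintype.card σ)
    (L : Language σ) (hL : L.IsContextFree) (hinf : Set.Infinite (L : Set (List σ))) :
    ∃ m : ℕ, 0 < m ∧
      ∀ n : ℕ, 2 ≤ n →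
      ∀ S : Finset (List σ), (∀ x ∈ S, x ∈ L ∧ x.length = n) →
      ∀ j₀ k : ℕ, 2 ≤ j₀ → j₀ ≤ n → 2 * j₀ ≤ k → k ≤ n →
      (∀ i : ℕ, 1 ≤ i → i ≤ n - j₀ → ∀ u : List σ, u.length = j₀ →
        (S.filter (fun x : List σ => (x.drop i).take j₀ = u)).card
            * (m * (k - j₀ + 1) * (n - j₀ + 1)) < S.card) →
      ∃ i j : ℕ, 1 ≤ i ∧ i ≤ n ∧ j₀ ≤ j ∧ j ≤ k ∧ i + j ≤ n ∧
        ∃ x ∈ S, ∃ y ∈ S,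
          (x.drop i).take j ≠ (y.drop i).take j ∧
          (x.take i ++ (y.drop i).take j ++ x.drop (i + j)) ∈ L ∧
          (y.take i ++ (x.drop i).take j ++ y.drop (i + j)) ∈ L :=
  swapping_lemma_contextFree_general hσ L hL
end

section
/- Key lemma on stack transitions: Assume j₀ ≥ 2 and 2j₀ ≤ k ≤ n. Let γ = (s_{i₀}, …, s_{i₁}) be a sequence of stack contents indexed by an interval I = [i₀, i₁] with |I| > k, such that |s_{i₀}| = |s_{i₁}| = ℓ₀, |s_b| ≥ ℓ₀ for all b ∈ I, and consecutive heights differ by at most 1. Then there exist a subinterval I' = [i'₀, i'₁] ⊆ I and a height ℓ such that |s_{i'₀}| = |s_{i'₁}| = ℓ, j₀ ≤ |I'| ≤ k, and minwid_I(ℓ) ≤ |I'| ≤ maxwid_I(ℓ). -/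
/-- `SubintervalWidths f i₀ i₁ ℓ` is the set of widths `b - a` of subintervals
`[a, b] ⊆ [i₀, i₁]` whose two endpoints have height `ℓ` and in which no
height drops below `ℓ`.  `sInf` of this set is `minwid_I(ℓ)` and `sSup`
of it is `maxwid_I(ℓ)`. -/
def SubintervalWidths (f : ℕ → ℕ) (i₀ i₁ ℓ : ℕ) : Set ℕ :=
  { d | ∃ a b, i₀ ≤ a ∧ a ≤ b ∧ b ≤ i₁ ∧ f a = ℓ ∧ f b = ℓ ∧
      (∀ c, a ≤ c → c ≤ b → ℓ ≤ f c) ∧ b - a = d }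

/-- **Key lemma on stack transitions.**
Assume `j₀ ≥ 2` and `2j₀ ≤ k ≤ n`.  Let `γ = (s_{i₀}, …, s_{i₁})` be a
sequence of stack contents on an interval `I = [i₀, i₁]` with `|I| > k` such
that the heights `|s_b|` satisfy: `|s_{i₀}| = |s_{i₁}| = ℓ₀`, `|s_b| ≥ ℓ₀`
throughout `I`, and consecutive heights differ by at most `1`.  Then there
are a subinterval `I' = [a, b] ⊆ I` and a height `ℓ` such that
`|s_a| = |s_b| = ℓ`, `j₀ ≤ |I'| ≤ k`, and
`minwid_I(ℓ) ≤ |I'| ≤ maxwid_I(ℓ)`. -/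
theorem key_lemma_stack_transitions {Γ : Type}
    (j₀ k n : ℕ) (hj₀ : 2 ≤ j₀) (hk : 2 * j₀ ≤ k) (hkn : k ≤ n)
    (i₀ i₁ : ℕ) (hI : k < i₁ - i₀) (hle : i₀ ≤ i₁)
    (s : ℕ → List Γ) (ℓ₀ : ℕ)
    (h₀ : (s i₀).length = ℓ₀) (h₁ : (s i₁).length = ℓ₀)
    (hmin : ∀ b, i₀ ≤ b → b ≤ i₁ → ℓ₀ ≤ (s b).length)
    (hstep : ∀ b, i₀ ≤ b → b < i₁ →
      (s (b + 1)).length ≤ (s b).length + 1 ∧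
      (s b).length ≤ (s (b + 1)).length + 1) :
    ∃ a b ℓ : ℕ, i₀ ≤ a ∧ a ≤ b ∧ b ≤ i₁ ∧
      (s a).length = ℓ ∧ (s b).length = ℓ ∧
      j₀ ≤ b - a ∧ b - a ≤ k ∧
      sInf (SubintervalWidths (fun c => (s c).length) i₀ i₁ ℓ) ≤ b - a ∧
      b - a ≤ sSup (SubintervalWidths (fun c => (s c).length) i₀ i₁ ℓ) := by
  have aux : ∀ w a b ℓ, b - a = w → i₀ ≤ a → a ≤ b → b ≤ i₁ →
      (s a).length = ℓ → (s b).length = ℓ →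
      (∀ c, a ≤ c → c ≤ b → ℓ ≤ (s c).length) → j₀ ≤ b - a →
      ∃ a' b' ℓ', i₀ ≤ a' ∧ a' ≤ b' ∧ b' ≤ i₁ ∧
        (s a').length = ℓ' ∧ (s b').length = ℓ' ∧
        (∀ c, a' ≤ c → c ≤ b' → ℓ' ≤ (s c).length) ∧
        j₀ ≤ b' - a' ∧ b' - a' ≤ k := by
    intro w
    induction w using Nat.strong_induction_on with
    | _ w ih =>
      intro a b ℓ hw ha hab hb hfa hfb hall hj
      by_cases hk' : b - a ≤ k
      · exact ⟨a, b, ℓ, ha, hab, hb, hfa, hfb, hall, hj, hk'⟩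
      push_neg at hk'
      by_cases hc : ∃ c, a < c ∧ c < b ∧ (s c).length = ℓ
      · obtain ⟨c, hac, hcb, hfc⟩ := hc
        by_cases hj' : j₀ ≤ c - a
        · exact ih (c - a) (by omega) a c ℓ rfl ha (le_of_lt hac) (by omega)
            hfa hfc (fun d hd hd' => hall d hd (by omega)) hj'
        · exact ih (b - c) (by omega) c b ℓ rfl (by omega) (le_of_lt hcb) hb
            hfc hfb (fun d hd hd' => hall d (by omega) hd') (by omega)
      · push_neg at hc
        have hgt : ∀ d, a < d → d < b → ℓ + 1 ≤ (s d).length := by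
          intro d hd hd'
          have h1 := hall d (le_of_lt hd) (le_of_lt hd')
          have h2 := hc d hd hd'
          omega
        have hab' : a + 1 < b := by omega
        have hfa' : (s (a + 1)).length = ℓ + 1 := by
          have h1 := (hstep a ha (by omega)).1
          have h2 := hgt (a + 1) (by omega) hab'
          omega
        have hfb' : (s (b - 1)).length = ℓ + 1 := by
          have heq : b - 1 + 1 = b := by omega
          have h1 := (hstep (b - 1) (by omega) (by omega)).2
          rw [heq] at h1
          have h2 := hgt (b - 1) (by omega) (by omega)
          omega
        exact ih (b - 1 - (a + 1)) (by omega) (a + 1) (b - 1) (ℓ + 1) rfl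
          (by omega) (by omega) (by omega) hfa' hfb'
          (fun d hd hd' => hgt d (by omega) (by omega)) (by omega)
  obtain ⟨a, b, ℓ, ha, hab, hb, hfa, hfb, hall, hj, hk'⟩ :=
    aux (i₁ - i₀) i₀ i₁ ℓ₀ rfl le_rfl hle le_rfl h₀ h₁ hmin (by omega)
  have hmem : b - a ∈ SubintervalWidths (fun c => (s c).length) i₀ i₁ ℓ :=
    ⟨a, b, ha, hab, hb, hfa, hfb, hall, rfl⟩
  have hbdd : BddAbove (SubintervalWidths (fun c => (s c).length) i₀ i₁ ℓ) := by
    refine ⟨i₁ - i₀, ?_⟩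
    rintro d ⟨a', b', h1, h2, h3, _, _, _, rfl⟩
    omega
  exact ⟨a, b, ℓ, ha, hab, hb, hfa, hfb, hj, hk',
    Nat.sInf_le hmem, le_csSup hbdd hmem⟩
end

section
/- Let M be the normalized NPDA for L. Fix j, i, accepting paths p, p', a stack symbol v ∈ Γ, and t ∈ Γ*. For strings x, y of length n accepted by M, if along path p on input x the stack at boundary i is v·s, at boundary i+j is t·s, and no symbol of s is accessed in between, and similarly for y along p' with the same v and t (with possibly different s'), then the swapped strings pref_i(x)·midd_{i,i+j}(y)·suf_{n−i−j}(x) and pref_i(y)·midd_{i,i+j}(x)·suf_{n−i−j}(y) both belong to L. -/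
/-- `PDARun δ s x s'` : starting with stack `s`, the normalized NPDA with
input-reading transition relation `δ` can consume the input string `x` and
end with stack `s'`, popping the top stack symbol and pushing `u ∈ δ a A` at
each step.  A run `PDARun δ [v] w t` from the single-symbol stack `[v]` to
`t` expresses `G(x : v) = t`: the portion of the stack below `v` is never
accessed while `w` is scanned. -/
inductive PDARun {σ Γ : Type} (δ : σ → Γ → Set (List Γ)) :
    List Γ → List σ → List Γ → Prop
  | refl (s) : PDARun δ s [] s
  | step {A rest u a x s'} : u ∈ δ a A →
      PDARun δ (u ++ rest) x s' → PDARun δ (A :: rest) (a :: x) s'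

theorem PDARun.mono {σ Γ : Type} {δ : σ → Γ → Set (List Γ)}
    {s1 w s2} (h : PDARun δ s1 w s2) (r : List Γ) :
    PDARun δ (s1 ++ r) w (s2 ++ r) := by
  induction h with
  | refl s => exact .refl _
  | step hu _ ih => exact .step hu (by simpa using ih)

theorem PDARun.trans {σ Γ : Type} {δ : σ → Γ → Set (List Γ)}
    {s1 w s2 w' s3} (h : PDARun δ s1 w s2) (h' : PDARun δ s2 w' s3) :
    PDARun δ s1 (w ++ w') s3 := by
  induction h with
  | refl s => exact h'
  | step hu _ ih => exact .step hu (ih h')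

/-- **Swapping middle segments with matching stack behaviour.**
Let `M` be the normalized NPDA recognizing `L` (initial stack `Sz` after the
left end-marker, acceptance with stack `z`).  Fix `i`, `j`, a stack symbol
`v` and `t ∈ Γ*`.  Suppose the length-`n` strings `x` and `y` are accepted
along paths on which the stack at boundary `i` is `v·s` (resp. `v·s'`), the
stack at boundary `i+j` is `t·s` (resp. `t·s'`), and no symbol of `s`
(resp. `s'`) is accessed in between.  Then the swapped strings
`pref_i(x)·midd_{i,i+j}(y)·suf_{n-i-j}(x)` and
`pref_i(y)·midd_{i,i+j}(x)·suf_{n-i-j}(y)` both belong to `L`. -/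
theorem swap_middle_segments {σ Γ : Type} (δ : σ → Γ → Set (List Γ))
    (hpush : ∀ a A u, u ∈ δ a A → u.length ≤ 2)
    (z S : Γ) (hz : ∀ a, δ a z = ∅)
    (L : Language σ) (hLdef : ∀ w : List σ, w ∈ L ↔ PDARun δ [S, z] w [z])
    (n i j : ℕ) (hij : i + j ≤ n)
    (x y : List σ) (hx : x.length = n) (hy : y.length = n)
    (v : Γ) (t : List Γ) (s s' : List Γ)
    (hx1 : PDARun δ [S, z] (x.take i) (v :: s))
    (hx2 : PDARun δ [v] ((x.drop i).take j) t)
    (hx3 : PDARun δ (t ++ s) (x.drop (i + j)) [z])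
    (hy1 : PDARun δ [S, z] (y.take i) (v :: s'))
    (hy2 : PDARun δ [v] ((y.drop i).take j) t)
    (hy3 : PDARun δ (t ++ s') (y.drop (i + j)) [z]) :
    (x.take i ++ (y.drop i).take j ++ x.drop (i + j)) ∈ L ∧
    (y.take i ++ (x.drop i).take j ++ y.drop (i + j)) ∈ L := by
  refine ⟨(hLdef _).2 ?_, (hLdef _).2 ?_⟩
  · simpa [List.append_assoc] using hx1.trans ((hy2.mono s).trans hx3)
  · simpa [List.append_assoc] using hy1.trans ((hx2.mono s').trans hy3)
end
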